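/- arXiv:2110.01782 — 2 statements merged into one kernel-verified Lean document; each statement's English description precedes it below -/
import Mathlib

section
/- For n ≥ 5, the normal closure in B'_n of the element σ_3σ_1^{-1} is all of B'_n. -/
/-!
Since `σ₁` commutes with `x = σ₃σ₁⁻¹` and `B_n = B'_n ⟨σ₁⟩`, conjugating `x` by `B_n` gives the same
elements as conjugating it by `B'_n`, so the normal closure of `x` in `B'_n` is its normal closure
`N` in `B_n`. Modulo `N` we have `σ₃ = σ₁`, and two elements satisfying the braid relation that
commute are equal; this propagates to `σ₁ = σ₂ = ⋯ = σ_{n-1}` (reaching `σ₂` uses `σ₄`, whence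
`n ≥ 5`). Hence `B_n / N` is cyclic and `B'_n ≤ N`.
-/

/-- Relators of the Artin presentation of the braid group on `n` strands.
Generator `i : Fin (n-1)` corresponds to the Artin generator `σ_{i+1}`. -/
def braidRels (n : ℕ) : Set (FreeGroup (Fin (n - 1))) :=
  {r | (∃ i j : Fin (n - 1), (i : ℕ) + 1 = (j : ℕ) ∧
          r = .of i * .of j * .of i * (.of j * .of i * .of j)⁻¹) ∨
       (∃ i j : Fin (n - 1), (i : ℕ) + 2 ≤ (j : ℕ) ∧
          r = .of i * .of j * (.of j * .of i)⁻¹)}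

/-- The braid group on `n` strands. -/
def BraidGroup (n : ℕ) : Type := PresentedGroup (braidRels n)

instance (n : ℕ) : Group (BraidGroup n) := by unfold BraidGroup; infer_instance

/-- `sig n i` is the Artin generator `σ_i` (1-based: `1 ≤ i ≤ n-1`), and `1` otherwise. -/
def sig (n : ℕ) (i : ℕ) : BraidGroup n :=
  if h : 1 ≤ i ∧ i ≤ n - 1 then PresentedGroup.of ⟨i - 1, by omega⟩ else 1

/-- The exponent sum homomorphism `B_n → ℤ`, sending each Artin generator to `1`. -/
def expSum (n : ℕ) : BraidGroup n →* Multiplicative ℤ :=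
  PresentedGroup.toGroup (f := fun _ : Fin (n - 1) => Multiplicative.ofAdd (1 : ℤ))
    (by
      rintro r (⟨i, j, -, rfl⟩ | ⟨i, j, -, rfl⟩) <;>
        simp only [map_mul, map_inv, FreeGroup.lift_apply_of] <;> group)

/-- The Birman–Ko–Lee generator `ρ_{ij}`:
the half twist `(σ_{j-1} ⋯ σ_{i+1}) σ_i (σ_{j-1} ⋯ σ_{i+1})⁻¹`. -/
def rho (n i j : ℕ) : BraidGroup n :=
  (((List.range' (i + 1) (j - 1 - i)).reverse.map (sig n)).prod) * sig n i *
    (((List.range' (i + 1) (j - 1 - i)).reverse.map (sig n)).prod)⁻¹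

/-- The normal closure of `x` in the subgroup `H`. -/
def nclIn {G : Type*} [Group G] (H : Subgroup G) (x : G) : Subgroup G :=
  Subgroup.closure {y | ∃ g ∈ H, y = g * x * g⁻¹}

open scoped commutatorElement

theorem eq_of_braid_of_commute {G : Type*} [Group G] {a b : G} (hbraid : a * b * a = b * a * b)
    (hcomm : Commute a b) : a = b := by
  rw [hcomm.eq, mul_assoc, mul_assoc] at hbraid
  simpa using hbraid

theorem mul_inv_eq_commutatorElement_of_braid {G : Type*} [Group G] {a b : G}
    (h : a * b * a = b * a * b) : b * a⁻¹ = ⁅a * b, a⁆ := by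
  rw [commutatorElement_def, h]
  group

theorem commutator_le_ker_of_range_le_zpowers {G H : Type*} [Group G] [Group H] (f : G →* H)
    {a : H} (h : f.range ≤ Subgroup.zpowers a) : commutator G ≤ f.ker := by
  rw [commutator_def, Subgroup.commutator_le]
  rintro g - g' -
  obtain ⟨k, hk⟩ := Subgroup.mem_zpowers_iff.mp (h ⟨g, rfl⟩)
  obtain ⟨l, hl⟩ := Subgroup.mem_zpowers_iff.mp (h ⟨g', rfl⟩)
  rw [MonoidHom.mem_ker, map_commutatorElement, commutatorElement_eq_one_iff_mul_comm, ← hk, ← hl]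
  exact (Commute.zpow_zpow_self a k l).eq

theorem nclIn_eq_normalClosure {G : Type*} [Group G] {H : Subgroup G} [H.Normal] {x : G}
    (h : H ⊔ Subgroup.centralizer {x} = ⊤) :
    nclIn H x = Subgroup.normalClosure {x} := by
  rw [nclIn, Subgroup.normalClosure]
  congr 1
  ext y
  simp only [Set.mem_ofPred_eq, Group.mem_conjugatesOfSet_iff, Set.mem_singleton_iff,
    exists_eq_left, isConj_iff]
  constructor
  · rintro ⟨g, -, rfl⟩
    exact ⟨g, rfl⟩
  · rintro ⟨g, rfl⟩
    obtain ⟨k, hk, z, hz, rfl⟩ :=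
      Subgroup.mem_sup_of_normal_left.mp (h ▸ Subgroup.mem_top g : g ∈ H ⊔ _)
    refine ⟨k, hk, ?_⟩
    rw [Subgroup.mem_centralizer_singleton_iff] at hz
    rw [mul_assoc k z, hz]
    group

namespace BraidGroup

variable {n : ℕ}

theorem sig_eq_of {i : ℕ} (h1 : 1 ≤ i) (h2 : i ≤ n - 1) :
    sig n i = PresentedGroup.of ⟨i - 1, by omega⟩ :=
  dif_pos ⟨h1, h2⟩

theorem of_eq_sig (j : Fin (n - 1)) : (PresentedGroup.of j : BraidGroup n) = sig n (j + 1) := by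
  rw [sig_eq_of (by omega) (by omega)]
  rfl

theorem sig_braid {i : ℕ} (h1 : 1 ≤ i) (h2 : i + 1 ≤ n - 1) :
    sig n i * sig n (i + 1) * sig n i = sig n (i + 1) * sig n i * sig n (i + 1) := by
  rw [sig_eq_of h1 (by omega), sig_eq_of (by omega) h2]
  have hrel := PresentedGroup.mk_eq_mk_of_mul_inv_mem (rels := braidRels n)
    (Or.inl ⟨⟨i - 1, by omega⟩, ⟨i + 1 - 1, by omega⟩, by simp only; omega, rfl⟩)
  simp only [map_mul] at hrel
  exact hrel

theorem sig_commute {i j : ℕ} (h1 : 1 ≤ i) (h : i + 2 ≤ j) (h2 : j ≤ n - 1) :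
    Commute (sig n i) (sig n j) := by
  rw [sig_eq_of h1 (by omega), sig_eq_of (by omega) h2]
  have hrel := PresentedGroup.mk_eq_mk_of_mul_inv_mem (rels := braidRels n)
    (Or.inr ⟨⟨i - 1, by omega⟩, ⟨j - 1, by omega⟩, by simp only; omega, rfl⟩)
  simp only [map_mul] at hrel
  exact hrel

theorem eq_top_of_sig_mem {H : Subgroup (BraidGroup n)}
    (h : ∀ i, 1 ≤ i → i ≤ n - 1 → sig n i ∈ H) : H = ⊤ :=
  eq_top_iff.mpr fun g _ ↦ PresentedGroup.generated_by _ H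
    (fun j ↦ of_eq_sig j ▸ h _ (by omega) (by omega)) g

theorem sig_mul_sig_one_inv_mem_commutator {i : ℕ} (h1 : 1 ≤ i) (h2 : i ≤ n - 1) :
    sig n i * (sig n 1)⁻¹ ∈ commutator (BraidGroup n) := by
  induction i, h1 using Nat.le_induction with
  | base => rw [mul_inv_cancel]; exact one_mem _
  | succ k hk ih =>
    have hstep : sig n (k + 1) * (sig n k)⁻¹ ∈ commutator (BraidGroup n) := by
      rw [mul_inv_eq_commutatorElement_of_braid (sig_braid hk h2), commutator_def]
      exact Subgroup.commutator_mem_commutator (Subgroup.mem_top _) (Subgroup.mem_top _)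
    simpa [mul_assoc] using mul_mem hstep (ih (by omega))

theorem commutator_sup_zpowers_sig_one_eq_top :
    commutator (BraidGroup n) ⊔ Subgroup.zpowers (sig n 1) = ⊤ :=
  eq_top_of_sig_mem fun i h1 h2 ↦ by
    simpa using mul_mem (Subgroup.mem_sup_left (sig_mul_sig_one_inv_mem_commutator h1 h2))
      (Subgroup.mem_sup_right (Subgroup.mem_zpowers (sig n 1)))

variable {G : Type*} [Group G] (f : BraidGroup n →* G)

theorem map_sig_eq_map_sig_one_of_map_sig_three (hn : 5 ≤ n)
    (h31 : f (sig n 3) = f (sig n 1)) {i : ℕ} (h1 : 1 ≤ i) (h2 : i ≤ n - 1) :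
    f (sig n i) = f (sig n 1) := by
  have map_braid {k : ℕ} (hk : 1 ≤ k) (hk' : k + 1 ≤ n - 1)
      (hcomm : Commute (f (sig n k)) (f (sig n (k + 1)))) : f (sig n (k + 1)) = f (sig n k) :=
    (eq_of_braid_of_commute (by simpa only [map_mul] using congrArg f (sig_braid hk hk'))
      hcomm).symm
  have from_three {k : ℕ} (hk : 3 ≤ k) (hk' : k ≤ n - 1) : f (sig n k) = f (sig n 1) := by
    induction k, hk using Nat.le_induction with
    | base => exact h31
    | succ k hk ih =>
      have hcomm : Commute (f (sig n k)) (f (sig n (k + 1))) := by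
        rw [ih (by omega)]
        exact (sig_commute le_rfl (by omega) hk').map f
      exact (map_braid (by omega) hk' hcomm).trans (ih (by omega))
  rcases (show i = 1 ∨ i = 2 ∨ 3 ≤ i by omega) with rfl | rfl | hi
  · rfl
  · rw [← h31]
    refine (map_braid (k := 2) (by omega) (by omega) ?_).symm
    show Commute (f (sig n 2)) (f (sig n 3))
    rw [from_three le_rfl (by omega), ← from_three (k := 4) (by omega) (by omega)]
    exact (sig_commute (i := 2) (j := 4) (by omega) le_rfl (by omega)).map f
  · exact from_three hi h2

theorem range_le_zpowers_of_map_sig_eq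
    (h : ∀ i, 1 ≤ i → i ≤ n - 1 → f (sig n i) = f (sig n 1)) :
    f.range ≤ Subgroup.zpowers (f (sig n 1)) := by
  rintro _ ⟨g, rfl⟩
  have htop : (Subgroup.zpowers (f (sig n 1))).comap f = ⊤ :=
    eq_top_of_sig_mem fun i h1 h2 ↦ by
      rw [Subgroup.mem_comap, h i h1 h2]
      exact Subgroup.mem_zpowers _
  exact htop.ge (Subgroup.mem_top g)

end BraidGroup

open BraidGroup in
/-- For n ≥ 5, the normal closure in B'_n of σ₃σ₁⁻¹ is all of B'_n. -/
theorem normalClosure_sigma31_eq_commutator (n : ℕ) (hn : 5 ≤ n) :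
    nclIn (commutator (BraidGroup n)) (sig n 3 * (sig n 1)⁻¹) =
      commutator (BraidGroup n) := by
  set x := sig n 3 * (sig n 1)⁻¹
  have hxC : x ∈ commutator (BraidGroup n) :=
    sig_mul_sig_one_inv_mem_commutator (by omega) (by omega)
  have hσx : sig n 1 ∈ Subgroup.centralizer {x} :=
    Subgroup.mem_centralizer_singleton_iff.mpr <|
      ((sig_commute (n := n) (i := 1) (j := 3) le_rfl le_rfl (by omega)).mul_right
        (Commute.refl _).inv_right).eq
  have hsup : commutator (BraidGroup n) ⊔ Subgroup.centralizer {x} = ⊤ :=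
    top_unique (commutator_sup_zpowers_sig_one_eq_top.ge.trans
      (sup_le_sup_left (Subgroup.zpowers_le.mpr hσx) _))
  rw [nclIn_eq_normalClosure hsup]
  set N := Subgroup.normalClosure {x}
  refine le_antisymm (Subgroup.normalClosure_le_normal (Set.singleton_subset_iff.mpr hxC)) ?_
  have h31 : QuotientGroup.mk' N (sig n 3) = QuotientGroup.mk' N (sig n 1) := by
    rw [← mul_inv_eq_one, ← map_inv, ← map_mul, QuotientGroup.mk'_apply, QuotientGroup.eq_one_iff]
    exact Subgroup.subset_normalClosure rfl
  rw [← QuotientGroup.ker_mk' N]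
  exact commutator_le_ker_of_range_le_zpowers _ (range_le_zpowers_of_map_sig_eq _
    fun _ ↦ map_sig_eq_map_sig_one_of_map_sig_three _ hn h31)
end

section
/- In any group quotient of B'_n (n ≥ 5) in which the image of σ_2σ_1^{-1} has order dividing 2, one has the relation w̄^5 = 1 where w = σ_2σ_3σ_1^{-1}σ_2^{-1}, using the Gorin–Lin relations c_1 = uwu and uwu = w^2c_1^{-1}w. -/
section

variable {G : Type*} [Group G]

structure BraidTriple (a b c : G) : Prop where
  braid_ab : a * b * a = b * a * b
  braid_bc : b * c * b = c * b * c
  comm_ac : a * c = c * a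

namespace BraidTriple

variable {a b c : G} (h : BraidTriple a b c)
include h

theorem map {H : Type*} [Group H] (f : G →* H) : BraidTriple (f a) (f b) (f c) where
  braid_ab := by simp only [← map_mul, h.braid_ab]
  braid_bc := by simp only [← map_mul, h.braid_bc]
  comm_ac := by simp only [← map_mul, h.comm_ac]

theorem semiconjBy_left : SemiconjBy (a * b * c) a b :=
  calc a * b * c * a = a * b * (c * a) := mul_assoc _ _ _
    _ = a * b * a * c := by rw [← h.comm_ac]; group
    _ = b * a * b * c := by rw [h.braid_ab]
    _ = b * (a * b * c) := by group

theorem semiconjBy_mid : SemiconjBy (a * b * c) b c :=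
  calc a * b * c * b = a * (b * c * b) := by group
    _ = a * c * (b * c) := by rw [h.braid_bc]; group
    _ = c * (a * b * c) := by rw [h.comm_ac]; group

theorem sq_mul_inv_eq_one (hu : (b * a⁻¹) ^ 2 = 1) : (c * b⁻¹) ^ 2 = 1 := by
  have hδ : SemiconjBy (a * b * c) ((b * a⁻¹) ^ 2) ((c * b⁻¹) ^ 2) :=
    (h.semiconjBy_mid.mul_right h.semiconjBy_left.inv_right).pow_right 2
  rw [hu, SemiconjBy, mul_one] at hδ
  exact mul_eq_right.mp hδ.symm

theorem semiconjBy_w : SemiconjBy (b * c * a⁻¹ * b⁻¹) a c :=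
  calc b * c * a⁻¹ * b⁻¹ * a = b * c * a⁻¹ * b⁻¹ * (a * b * a) * a⁻¹ * b⁻¹ := by group
    _ = b * c * b * a⁻¹ * b⁻¹ := by rw [h.braid_ab]; group
    _ = c * (b * c * a⁻¹ * b⁻¹) := by rw [h.braid_bc]; group

theorem w_eq_mul_inv (hu : (b * a⁻¹) ^ 2 = 1) : b * c * a⁻¹ * b⁻¹ = a * c⁻¹ := by
  have ht : c * b⁻¹ * c = b := by
    rw [← mul_inv_eq_one, ← h.sq_mul_inv_eq_one hu, pow_two, mul_assoc]
  have hca : c * a⁻¹ = a⁻¹ * c := by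
    rw [mul_inv_eq_iff_eq_mul, mul_assoc, ← h.comm_ac, inv_mul_cancel_left]
  calc b * c * a⁻¹ * b⁻¹ = b * a⁻¹ * (c * b⁻¹ * c) * c⁻¹ := by
        rw [mul_assoc b, hca]; group
    _ = (b * a⁻¹) ^ 2 * (a * c⁻¹) := by rw [ht, pow_two]; group
    _ = a * c⁻¹ := by rw [hu, one_mul]

theorem w_eq_one (hu : (b * a⁻¹) ^ 2 = 1) : b * c * a⁻¹ * b⁻¹ = 1 := by
  have hw : a * c⁻¹ * a = c * (a * c⁻¹) := by
    simpa only [h.w_eq_mul_inv hu] using h.semiconjBy_w.eq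
  calc b * c * a⁻¹ * b⁻¹ = a * c⁻¹ * a * a⁻¹ := by rw [h.w_eq_mul_inv hu]; group
    _ = c * a * c⁻¹ * a⁻¹ := by rw [hw]; group
    _ = 1 := by rw [← h.comm_ac]; group

theorem w_mem_normalClosure :
    b * c * a⁻¹ * b⁻¹ ∈ Subgroup.normalClosure {(b * a⁻¹) ^ 2} := by
  set N := Subgroup.normalClosure {(b * a⁻¹) ^ 2}
  have hu : (QuotientGroup.mk' N b * (QuotientGroup.mk' N a)⁻¹) ^ 2 = 1 := by
    rw [← map_inv, ← map_mul, ← map_pow, QuotientGroup.mk'_apply, QuotientGroup.eq_one_iff]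
    exact Subgroup.subset_normalClosure rfl
  have hw := (h.map (QuotientGroup.mk' N)).w_eq_one hu
  rwa [← map_inv, ← map_inv, ← map_mul, ← map_mul, ← map_mul, QuotientGroup.mk'_apply,
    QuotientGroup.eq_one_iff] at hw

end BraidTriple

end

theorem Subgroup.normalClosure_le_map_subtype_of_commute {G : Type*} [Group G] {H : Subgroup G}
    {K : Subgroup H} [K.Normal] {s : H} (hs : s ∈ K) {x : G} (hx : Commute x s)
    (hH : ∀ g : G, ∃ k : ℤ, g * x ^ k ∈ H) :
    Subgroup.normalClosure {(s : G)} ≤ K.map H.subtype := by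
  rw [Subgroup.normalClosure, Subgroup.closure_le]
  intro y hy
  obtain ⟨_, rfl, hconj⟩ := Group.mem_conjugatesOfSet_iff.mp hy
  obtain ⟨g, rfl⟩ := isConj_iff.mp hconj
  obtain ⟨k, hk⟩ := hH g
  refine ⟨⟨g * x ^ k, hk⟩ * s * ⟨g * x ^ k, hk⟩⁻¹, Normal.conj_mem ‹_› s hs _, ?_⟩
  calc g * x ^ k * s * (g * x ^ k)⁻¹ = g * (x ^ k * s * (x ^ k)⁻¹) * g⁻¹ := by group
    _ = g * s * g⁻¹ := by rw [(hx.zpow_left k).eq]; group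

section BraidGroup

variable {n : ℕ}

theorem sig_eq_of {i : ℕ} (h1 : 1 ≤ i) (h2 : i ≤ n - 1) :
    sig n i = PresentedGroup.of (⟨i - 1, by omega⟩ : Fin (n - 1)) :=
  dif_pos ⟨h1, h2⟩

theorem of_mul_of_mul_of_eq {i j : Fin (n - 1)} (hij : (i : ℕ) + 1 = j) :
    (PresentedGroup.of i : BraidGroup n) * .of j * .of i = .of j * .of i * .of j :=
  PresentedGroup.mk_eq_mk_of_mul_inv_mem (Or.inl ⟨i, j, hij, rfl⟩)

theorem of_mul_of_eq {i j : Fin (n - 1)} (hij : (i : ℕ) + 2 ≤ j) :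
    (PresentedGroup.of i : BraidGroup n) * .of j = .of j * .of i :=
  PresentedGroup.mk_eq_mk_of_mul_inv_mem (Or.inr ⟨i, j, hij, rfl⟩)

theorem sig_mul_sig_mul_sig {i : ℕ} (h1 : 1 ≤ i) (h2 : i + 1 ≤ n - 1) :
    sig n i * sig n (i + 1) * sig n i = sig n (i + 1) * sig n i * sig n (i + 1) := by
  rw [sig_eq_of h1 (by omega), sig_eq_of (by omega) h2]
  exact of_mul_of_mul_of_eq (by simp only; omega)

theorem sig_mul_sig_comm {i j : ℕ} (h1 : 1 ≤ i) (hij : i + 2 ≤ j) (h2 : j ≤ n - 1) :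
    sig n i * sig n j = sig n j * sig n i := by
  rw [sig_eq_of h1 (by omega), sig_eq_of (by omega) h2]
  exact of_mul_of_eq (by simp only; omega)

theorem braidTriple_sig (hn : 4 ≤ n) : BraidTriple (sig n 1) (sig n 2) (sig n 3) where
  braid_ab := sig_mul_sig_mul_sig le_rfl (by omega)
  braid_bc := sig_mul_sig_mul_sig (by omega) (by omega)
  comm_ac := sig_mul_sig_comm le_rfl le_rfl (by omega)

theorem expSum_of (i : Fin (n - 1)) : expSum n (PresentedGroup.of i) = Multiplicative.ofAdd 1 :=
  PresentedGroup.toGroup.of _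

theorem expSum_sig {i : ℕ} (h1 : 1 ≤ i) (h2 : i ≤ n - 1) :
    expSum n (sig n i) = Multiplicative.ofAdd 1 := by
  rw [sig_eq_of h1 h2, expSum_of]

theorem eq_of_mul_mul_eq_mul_mul {A : Type*} [CommGroup A] {x y : A}
    (h : x * y * x = y * x * y) : x = y :=
  mul_left_cancel (a := x * y) (by rw [h, mul_comm y x])

theorem abelianization_of_of_eq (i j : Fin (n - 1)) :
    Abelianization.of (G := BraidGroup n) (.of i) = Abelianization.of (.of j) := by
  suffices key : ∀ k (hk : k < n - 1), Abelianization.of (G := BraidGroup n) (.of ⟨k, hk⟩)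
      = Abelianization.of (.of ⟨0, by omega⟩) from (key i i.2).trans (key j j.2).symm
  intro k
  induction k with
  | zero => intro _; rfl
  | succ m ih =>
    intro hk
    rw [← ih (by omega)]
    have h := congrArg Abelianization.of
      (of_mul_of_mul_of_eq (n := n) (i := ⟨m, by omega⟩) (j := ⟨m + 1, hk⟩) rfl)
    simp only [map_mul] at h
    exact (eq_of_mul_mul_eq_mul_mul h).symm

theorem abelianization_of_eq_zpow (i : Fin (n - 1)) (x : BraidGroup n) :
    Abelianization.of x =
      Abelianization.of (G := BraidGroup n) (.of i) ^ Multiplicative.toAdd (expSum n x) := by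
  have hom : (Abelianization.of : BraidGroup n →* _) =
      (zpowersHom (Abelianization (BraidGroup n))
        (Abelianization.of (G := BraidGroup n) (.of i))).comp (expSum n) :=
    PresentedGroup.ext fun j => by
      change _ = zpowersHom _ _ (expSum n (.of j))
      rw [expSum_of, zpowersHom_apply, toAdd_ofAdd, zpow_one]
      exact abelianization_of_of_eq j i
  exact (DFunLike.congr_fun hom x).trans (zpowersHom_apply _ _ _)

theorem ker_expSum_le_commutator (hn : 2 ≤ n) : (expSum n).ker ≤ commutator (BraidGroup n) := by
  intro x hx
  rw [← Abelianization.ker_of, MonoidHom.mem_ker, abelianization_of_eq_zpow ⟨0, by omega⟩,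
    (expSum n).mem_ker.mp hx, toAdd_one, zpow_zero]

theorem sig_mul_inv_sig_mem_commutator {i j : ℕ} (hi : 1 ≤ i) (hin : i ≤ n - 1) (hj : 1 ≤ j)
    (hjn : j ≤ n - 1) : sig n i * (sig n j)⁻¹ ∈ commutator (BraidGroup n) :=
  ker_expSum_le_commutator (by omega) <| by
    rw [MonoidHom.mem_ker, map_mul, map_inv, expSum_sig hi hin, expSum_sig hj hjn, mul_inv_cancel]

theorem exists_mul_sig_zpow_mem_commutator {i : ℕ} (hi : 1 ≤ i) (hin : i ≤ n - 1)
    (g : BraidGroup n) : ∃ k : ℤ, g * sig n i ^ k ∈ commutator (BraidGroup n) :=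
  ⟨-Multiplicative.toAdd (expSum n g), ker_expSum_le_commutator (by omega) <| by
    rw [MonoidHom.mem_ker, map_mul, map_zpow, expSum_sig hi hin]
    apply Multiplicative.toAdd.injective
    simp⟩

end BraidGroup

theorem w_pow_five_eq_one_general (n : ℕ) (hn : 5 ≤ n) {G : Type*} [Group G]
    (q : ↥(commutator (BraidGroup n)) →* G)
    (hu : ∀ a : ↥(commutator (BraidGroup n)),
      (a : BraidGroup n) = sig n 2 * (sig n 1)⁻¹ → (q a) ^ 2 = 1) :
    ∀ w : ↥(commutator (BraidGroup n)),
      (w : BraidGroup n) = sig n 2 * sig n 3 * (sig n 1)⁻¹ * (sig n 2)⁻¹ →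
      (q w) ^ 5 = 1 := by
  intro w hw
  have hu_mem : sig n 2 * (sig n 1)⁻¹ ∈ commutator (BraidGroup n) :=
    sig_mul_inv_sig_mem_commutator (by omega) (by omega) le_rfl (by omega)
  set u : ↥(commutator (BraidGroup n)) := ⟨_, hu_mem⟩
  have hσ₄₂ : Commute (sig n 4) (sig n 2) := (sig_mul_sig_comm (by omega) le_rfl (by omega)).symm
  have hσ₄₁ : Commute (sig n 4) (sig n 1) := (sig_mul_sig_comm le_rfl (by omega) (by omega)).symm
  have hN := Subgroup.normalClosure_le_map_subtype_of_commute (K := q.ker) (s := u ^ 2)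
    (by rw [MonoidHom.mem_ker, map_pow, hu u rfl]) ((hσ₄₂.mul_right hσ₄₁.inv_right).pow_right 2)
    (exists_mul_sig_zpow_mem_commutator (by omega) (by omega))
  obtain ⟨w', hw'q, hw'w⟩ := hN (braidTriple_sig (by omega)).w_mem_normalClosure
  obtain rfl : w' = w := Subtype.ext (hw'w.trans hw.symm)
  rw [q.mem_ker.mp hw'q, one_pow]

/-- In any quotient of B'_n (n ≥ 5) in which the image of σ₂σ₁⁻¹ has order dividing 2,
the image of w = σ₂σ₃σ₁⁻¹σ₂⁻¹ satisfies w̄⁵ = 1. -/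
theorem w_pow_five_eq_one (n : ℕ) (hn : 5 ≤ n) {G : Type*} [Group G]
    (q : ↥(commutator (BraidGroup n)) →* G) (hq : Function.Surjective q)
    (hu : ∀ a : ↥(commutator (BraidGroup n)),
      (a : BraidGroup n) = sig n 2 * (sig n 1)⁻¹ → (q a) ^ 2 = 1) :
    ∀ w : ↥(commutator (BraidGroup n)),
      (w : BraidGroup n) = sig n 2 * sig n 3 * (sig n 1)⁻¹ * (sig n 2)⁻¹ →
      (q w) ^ 5 = 1 :=
  w_pow_five_eq_one_general n hn q hu
end
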